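/- arXiv:1703.08693 — 2 statements merged into one kernel-verified Lean document; each statement's English description precedes it below -/
import Mathlib

section
/- Let (P, y) be a KZ doctrine on a 2-category 𝒞, let L : A ⟶ B be a 1-cell such that PL := lan_L has a right adjoint res_L with unit η, let X be a P-cocomplete object, and let H : A ⟶ X with left extension H̄ : PA ⟶ X of H along y_A exhibited by the invertible 2-cell c_H. Then the composite 2-cell H ⟶ H̄·y_A ⟶ H̄·res_L·PL·y_A ⟶ H̄·res_L·y_B·L, obtained by pasting c_H, the unit η (suitably whiskered), and the isomorphism y_L : PL·y_A ⟶ y_B·L (whiskered by H̄·res_L), exhibits H̄·res_L·y_B as a left extension of H along L. -/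
open CategoryTheory Bicategory

universe w v u

variable {𝒞 : Type u} [Bicategory.{w, v} 𝒞]

/-- A 2-cell `η : I ⟶ L ≫ R` exhibits `R` as a left extension of `I` along `L` when
pasting with `η` gives a bijection between 2-cells `R ⟶ M` and 2-cells `I ⟶ L ≫ M`. -/
def ExhibitsLeftExt {a b c : 𝒞} (L : a ⟶ b) (I : a ⟶ c) (R : b ⟶ c)
    (η : I ⟶ L ≫ R) : Prop :=
  ∀ M : b ⟶ c, Function.Bijective (fun σ : R ⟶ M => η ≫ L ◁ σ)

/-- The left extension `(R, η)` of `I` along `L` is respected by `E` when the whiskering of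
`η` by `E` exhibits `R ≫ E` as a left extension of `I ≫ E` along `L`. -/
def RespectsLeftExt {a b c d : 𝒞} (L : a ⟶ b) (I : a ⟶ c) (R : b ⟶ c)
    (η : I ⟶ L ≫ R) (E : c ⟶ d) : Prop :=
  ExhibitsLeftExt L (I ≫ E) (R ≫ E) ((η ▷ E) ≫ (α_ L R E).hom)

/-- A 2-cell `η : I ⟶ L ≫ R` exhibits `L` as a left lifting of `I` through `R` when pasting
with `η` gives a bijection between 2-cells `L ⟶ K` and 2-cells `I ⟶ K ≫ R`. -/
def ExhibitsLeftLift {a b c : 𝒞} (R : b ⟶ c) (I : a ⟶ c) (L : a ⟶ b)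
    (η : I ⟶ L ≫ R) : Prop :=
  ∀ K : a ⟶ b, Function.Bijective (fun δ : L ⟶ K => η ≫ δ ▷ R)

/-- The left lifting is absolute when it is preserved by whiskering with any 1-cell `F`. -/
def ExhibitsAbsLeftLift {a b c : 𝒞} (R : b ⟶ c) (I : a ⟶ c) (L : a ⟶ b)
    (η : I ⟶ L ≫ R) : Prop :=
  ∀ {x : 𝒞} (F : x ⟶ a),
    ExhibitsLeftLift R (F ≫ I) (F ≫ L) ((F ◁ η) ≫ (α_ F L R).inv)

/-- A 1-cell is (representably) fully faithful when whiskering by it is bijective on 2-cells. -/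
def FullyFaithful1Cell {a b : 𝒞} (F : a ⟶ b) : Prop :=
  ∀ {x : 𝒞} (u v : x ⟶ a), Function.Bijective (fun σ : u ⟶ v => σ ▷ F)

/-- A KZ doctrine on a 2-category (Marmolejo–Wood style, in terms of left extensions). -/
structure KZDoctrine (𝒞 : Type u) [Bicategory.{w, v} 𝒞] where
  /-- action on objects -/
  P : 𝒞 → 𝒞
  /-- the units -/
  y : ∀ A : 𝒞, A ⟶ P A
  /-- chosen left extensions along the units -/
  ext : ∀ {A C : 𝒞}, (A ⟶ P C) → (P A ⟶ P C)
  /-- the invertible 2-cells exhibiting the chosen left extensions -/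
  c : ∀ {A C : 𝒞} (F : A ⟶ P C), F ≅ y A ≫ ext F
  ext_isLeftExt : ∀ {A C : 𝒞} (F : A ⟶ P C),
    ExhibitsLeftExt (y A) F (ext F) (c F).hom
  /-- (a) the identity 2-cell exhibits `𝟙 (P A)` as a left extension of `y A` along `y A` -/
  y_selfExt : ∀ A : 𝒞, ExhibitsLeftExt (y A) (y A) (𝟙 (P A)) (ρ_ (y A)).inv
  /-- (b) the chosen left extensions respect each other -/
  ext_respects : ∀ {A B C : 𝒞} (F : A ⟶ P B) (G : B ⟶ P C),
    RespectsLeftExt (y A) F (ext F) (c F).hom (ext G)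

/-- `lan L` (also denoted `PL`), the chosen left extension of `y B ∘ L` along `y A`. -/
abbrev KZDoctrine.lan (D : KZDoctrine 𝒞) {A B : 𝒞} (L : A ⟶ B) : D.P A ⟶ D.P B :=
  D.ext (L ≫ D.y B)

/-- An object `X` is `P`-cocomplete when every `G : A ⟶ X` admits a left extension along
`y A` exhibited by an invertible 2-cell, and these left extensions respect the chosen left
extensions of the KZ doctrine. -/
def PCocomplete (D : KZDoctrine 𝒞) (X : 𝒞) : Prop :=
  ∀ {A : 𝒞} (G : A ⟶ X), ∃ (Gb : D.P A ⟶ X) (cG : G ≅ D.y A ≫ Gb),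
    ExhibitsLeftExt (D.y A) G Gb cG.hom ∧
    ∀ {A' : 𝒞} (F : A' ⟶ D.P A),
      RespectsLeftExt (D.y A') F (D.ext F) (D.c F).hom Gb

/-- A 1-cell is a `P`-homomorphism when it respects all left extensions along units. -/
def PHomomorphism (D : KZDoctrine 𝒞) {X Y : 𝒞} (E : X ⟶ Y) : Prop :=
  ∀ {A : 𝒞} (G : A ⟶ X) (Gb : D.P A ⟶ X) (η : G ⟶ D.y A ≫ Gb),
    ExhibitsLeftExt (D.y A) G Gb η → RespectsLeftExt (D.y A) G Gb η E

/-- The data `(R, φ)` witnesses `P`-admissibility of `L`: `φ` exhibits `R` as a left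
extension of `y A` along `L`, and this left extension is respected by every left extension
`Hb : P A ⟶ X` along `y A` into every `P`-cocomplete object `X`. -/
def AdmissibleData (D : KZDoctrine 𝒞) {A B : 𝒞} (L : A ⟶ B) (R : B ⟶ D.P A)
    (φ : D.y A ⟶ L ≫ R) : Prop :=
  ExhibitsLeftExt L (D.y A) R φ ∧
  ∀ {X : 𝒞}, PCocomplete D X →
    ∀ (H : A ⟶ X) (Hb : D.P A ⟶ X) (cH : H ≅ D.y A ≫ Hb),
      ExhibitsLeftExt (D.y A) H Hb cH.hom → RespectsLeftExt L (D.y A) R φ Hb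

/-- A 1-cell `L` is `P`-admissible when some `(R, φ)` witnesses its admissibility. -/
def PAdmissible (D : KZDoctrine 𝒞) {A B : 𝒞} (L : A ⟶ B) : Prop :=
  ∃ (R : B ⟶ D.P A) (φ : D.y A ⟶ L ≫ R), AdmissibleData D L R φ

/-!
Since `lan L ⊣ res`, the 1-cell `res ≫ Hb` is a left extension of `Hb` along `lan L`; pasting with
`c_H` and transporting along `y_L` makes it a left extension of `H` along `L ≫ y B`. The right
adjoint `res` is cocontinuous: the identity exhibits it as the left extension of `y B ≫ res`
along `y B`, because the comparison `ext (y B ≫ res) ⟶ res` has a section, the mate of a cell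
built from the unit by density of `y A`. Since `X` is cocomplete, `Hb` respects this extension
and every `M : B ⟶ X` is of the form `y B ≫ Mb`, so whiskering by `y B` identifies 2-cells out of
`res ≫ Hb` with 2-cells out of `y B ≫ res ≫ Hb`; this moves the extension from `L ≫ y B` to `L`.
-/

theorem isIso_whiskerLeft_of_iso {a b c : 𝒞} {F F' : a ⟶ b} (e : F ≅ F') {G G' : b ⟶ c}
    (θ : G ⟶ G') [IsIso (F' ◁ θ)] : IsIso (F ◁ θ) := by
  have : F ◁ θ = e.hom ▷ G ≫ F' ◁ θ ≫ e.inv ▷ G' := by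
    rw [← whisker_exchange_assoc, ← comp_whiskerRight, e.hom_inv_id, id_whiskerRight,
      Category.comp_id]
  rw [this]
  infer_instance

namespace ExhibitsLeftExt

variable {a b c x : 𝒞}

theorem of_iso {L L' : a ⟶ b} {I I' : a ⟶ c} {R R' : b ⟶ c} {η : I ⟶ L ≫ R}
    (h : ExhibitsLeftExt L I R η) (e : L ≅ L') (j : I' ≅ I) (i : R ≅ R') {η' : I' ⟶ L' ≫ R'}
    (w : j.hom ≫ η ≫ e.hom ▷ R ≫ L' ◁ i.hom = η') : ExhibitsLeftExt L' I' R' η' := by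
  intro M
  have key : (fun σ : R' ⟶ M => η' ≫ L' ◁ σ) =
      (j.symm.homFromEquiv.trans (whiskerRightIso e M).homToEquiv) ∘ (fun σ => η ≫ L ◁ σ) ∘
        i.symm.homFromEquiv := by
    funext σ
    simp [← w, ← whiskerLeft_comp, whisker_exchange]
  rw [key]
  exact (Equiv.bijective _).comp ((h M).comp (Equiv.bijective _))

theorem exists_iso {L : a ⟶ b} {I : a ⟶ c} {R R' : b ⟶ c} {η : I ⟶ L ≫ R} {η' : I ⟶ L ≫ R'}
    (h : ExhibitsLeftExt L I R η) (h' : ExhibitsLeftExt L I R' η') :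
    ∃ i : R ≅ R', η ≫ L ◁ i.hom = η' := by
  obtain ⟨k, hk⟩ := (h R').2 η'
  obtain ⟨k', hk'⟩ := (h' R).2 η
  refine ⟨⟨k, k', (h R).1 ?_, (h' R').1 ?_⟩, hk⟩ <;>
    simp only [whiskerLeft_comp, whiskerLeft_id, Category.comp_id, ← Category.assoc, hk, hk']

theorem comp {L₁ : a ⟶ b} {L₂ : b ⟶ c} {I : a ⟶ x} {R₁ : b ⟶ x} {R₂ : c ⟶ x}
    {η₁ : I ⟶ L₁ ≫ R₁} {η₂ : R₁ ⟶ L₂ ≫ R₂}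
    (h₁ : ExhibitsLeftExt L₁ I R₁ η₁) (h₂ : ExhibitsLeftExt L₂ R₁ R₂ η₂) :
    ExhibitsLeftExt (L₁ ≫ L₂) I R₂ (η₁ ≫ L₁ ◁ η₂ ≫ (α_ L₁ L₂ R₂).inv) := by
  intro M
  have key : (fun σ : R₂ ⟶ M => (η₁ ≫ L₁ ◁ η₂ ≫ (α_ L₁ L₂ R₂).inv) ≫ (L₁ ≫ L₂) ◁ σ) =
      (fun τ => τ ≫ (α_ L₁ L₂ M).inv) ∘ (fun τ => η₁ ≫ L₁ ◁ τ) ∘ (fun σ => η₂ ≫ L₂ ◁ σ) := by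
    funext σ
    simp
  rw [key]
  exact ((α_ L₁ L₂ M).symm.homToEquiv.bijective).comp ((h₁ _).comp (h₂ M))

theorem bijective_comp {L : a ⟶ b} {I : a ⟶ c} {R : b ⟶ c} {η : I ⟶ L ≫ R}
    (h : ExhibitsLeftExt L I R η) {G G' : b ⟶ c} (θ : G ⟶ G') [IsIso (L ◁ θ)] :
    Function.Bijective (fun σ : R ⟶ G => σ ≫ θ) := by
  have key : (fun σ => η ≫ L ◁ σ) ∘ (fun σ : R ⟶ G => σ ≫ θ) =
      (asIso (L ◁ θ)).homToEquiv ∘ (fun σ => η ≫ L ◁ σ) := by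
    funext σ
    simp
  rw [← (h G').of_comp_iff', key]
  exact (Equiv.bijective _).comp (h G)

theorem isIso_of_section {L : a ⟶ b} {I : a ⟶ c} {K R : b ⟶ c} {η : I ⟶ L ≫ K}
    (h : ExhibitsLeftExt L I K η) {θ : K ⟶ R} [IsIso (L ◁ θ)] {ψ : R ⟶ K}
    (hψ : ψ ≫ θ = 𝟙 R) : IsIso θ :=
  ⟨ψ, (h.bijective_comp θ).1 (by simp [hψ]), hψ⟩

/-- By `hR` and `hM`, whiskering by `L₂` is an equivalence from 1-cells `c ⟶ x` with 2-cells out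
of `R` onto 1-cells `b ⟶ x` with 2-cells out of `L₂ ≫ R`. -/
theorem of_comp {L₁ : a ⟶ b} {L₂ : b ⟶ c} {I : a ⟶ x} {R : c ⟶ x} {η : I ⟶ (L₁ ≫ L₂) ≫ R}
    (h : ExhibitsLeftExt (L₁ ≫ L₂) I R η) (hR : ExhibitsLeftExt L₂ (L₂ ≫ R) R (𝟙 _))
    (hM : ∀ M : b ⟶ x, ∃ N : c ⟶ x, Nonempty (M ≅ L₂ ≫ N)) :
    ExhibitsLeftExt L₁ I (L₂ ≫ R) (η ≫ (α_ L₁ L₂ R).hom) := by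
  intro M
  obtain ⟨N, ⟨e⟩⟩ := hM M
  have key : (fun σ : L₂ ≫ R ⟶ M => (η ≫ (α_ L₁ L₂ R).hom) ≫ L₁ ◁ σ) ∘
        (e.symm.homToEquiv ∘ fun τ : R ⟶ N => 𝟙 _ ≫ L₂ ◁ τ) =
      ((α_ L₁ L₂ N).homToEquiv.trans (whiskerLeftIso L₁ e.symm).homToEquiv) ∘
        (fun τ => η ≫ (L₁ ≫ L₂) ◁ τ) := by
    funext τ
    simp
  rw [← Function.Bijective.of_comp_iff _ ((Equiv.bijective _).comp (hR N)), key]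
  exact (Equiv.bijective _).comp (h N)

end ExhibitsLeftExt

theorem RespectsLeftExt.of_iso {a b c d : 𝒞} {L : a ⟶ b} {I : a ⟶ c} {R : b ⟶ c}
    {η : I ⟶ L ≫ R} {E E' : c ⟶ d} (hE : RespectsLeftExt L I R η E) (e : E ≅ E') :
    RespectsLeftExt L I R η E' :=
  ExhibitsLeftExt.of_iso hE (Iso.refl L) (whiskerLeftIso I e).symm (whiskerLeftIso R e) (by
    simp [whisker_exchange_assoc])

theorem RespectsLeftExt.of_exhibitsLeftExt {a b c d : 𝒞} {L : a ⟶ b} {I : a ⟶ c} {R R' : b ⟶ c}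
    {η : I ⟶ L ≫ R} {η' : I ⟶ L ≫ R'} {E : c ⟶ d} (hE : RespectsLeftExt L I R η E)
    (h : ExhibitsLeftExt L I R η) (h' : ExhibitsLeftExt L I R' η') :
    RespectsLeftExt L I R' η' E := by
  obtain ⟨i, rfl⟩ := h.exists_iso h'
  exact ExhibitsLeftExt.of_iso hE (Iso.refl L) (Iso.refl _) (whiskerRightIso i E) (by simp)

theorem CategoryTheory.Bicategory.LeftExtension.IsKan.exhibitsLeftExt {a b c : 𝒞} {f : a ⟶ b}
    {g : a ⟶ c} {t : LeftExtension f g} (H : t.IsKan) :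
    ExhibitsLeftExt f g t.extension t.unit :=
  fun M => ⟨fun _ _ hσ => H.hom_ext hσ, fun τ => ⟨H.desc (.mk M τ), H.fac (.mk M τ)⟩⟩

namespace CategoryTheory.Bicategory.Adjunction

variable {a b z : 𝒞} {f : a ⟶ b} {u : b ⟶ a} (adj : f ⊣ u)

theorem exhibitsLeftExt_unit : ExhibitsLeftExt f (𝟙 a) u adj.unit :=
  (LeftExtension.IsAbsKan.isKan adj.isAbsoluteLeftKan).exhibitsLeftExt

theorem exhibitsLeftExt_comp (K : a ⟶ z) :
    ExhibitsLeftExt f K (u ≫ K) ((λ_ K).inv ≫ adj.unit ▷ K ≫ (α_ f u K).hom) :=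
  (adj.isAbsoluteLeftKan K).exhibitsLeftExt.of_iso (Iso.refl f) (λ_ K).symm (Iso.refl _)
    (by simp; rfl)

end CategoryTheory.Bicategory.Adjunction

theorem KZDoctrine.exhibitsLeftExt_of_adjunction (D : KZDoctrine 𝒞) {A B : 𝒞} {L : A ⟶ B} {res : D.P B ⟶ D.P A}
    (adj : D.lan L ⊣ res) : ExhibitsLeftExt (D.y B) (D.y B ≫ res) res (𝟙 _) := by
  obtain ⟨κ, hκ⟩ := (D.ext_isLeftExt (D.y B ≫ res) res).2 (𝟙 _)
  have hyκ : D.y B ◁ κ = (D.c (D.y B ≫ res)).inv := (Iso.hom_comp_eq_id _).mp hκ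
  have : IsIso (D.y B ◁ κ) := by rw [hyκ]; infer_instance
  have : IsIso ((L ≫ D.y B) ◁ κ) := by rw [comp_whiskerLeft]; infer_instance
  have : IsIso (D.y A ◁ D.lan L ◁ κ) := by
    have := isIso_whiskerLeft_of_iso (D.c (L ≫ D.y B)).symm κ
    rwa [comp_whiskerLeft, isIso_comp_left_iff, isIso_comp_right_iff] at this
  obtain ⟨ψhat, hψhat⟩ := ((D.y_selfExt A).bijective_comp (D.lan L ◁ κ)).2 adj.unit
  obtain ⟨ψ, hψ⟩ := (adj.exhibitsLeftExt_unit _).2 ψhat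
  have hψκ : ψ ≫ κ = 𝟙 res := (adj.exhibitsLeftExt_unit res).1 (by
    dsimp only at hψ hψhat ⊢
    rw [whiskerLeft_comp, reassoc_of% hψ, hψhat, whiskerLeft_id, Category.comp_id])
  have := (D.ext_isLeftExt _).isIso_of_section hψκ
  exact (D.ext_isLeftExt _).of_iso (Iso.refl _) (Iso.refl _) (asIso κ) (by simp [hκ])

theorem PCocomplete.respectsLeftExt {D : KZDoctrine 𝒞} {X A A' : 𝒞} (hX : PCocomplete D X)
    {H : A ⟶ X} {Hb : D.P A ⟶ X} {η : H ⟶ D.y A ≫ Hb} (hHb : ExhibitsLeftExt (D.y A) H Hb η)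
    (F : A' ⟶ D.P A) : RespectsLeftExt (D.y A') F (D.ext F) (D.c F).hom Hb := by
  obtain ⟨Gb, cG, hGb, hGbResp⟩ := hX H
  obtain ⟨i, -⟩ := hGb.exists_iso hHb
  exact (hGbResp F).of_iso i

/-- If `lan L ⊣ res` with unit `adj.unit`, `X` is `P`-cocomplete and
`(Hb, c_H)` is a left extension of `H` along `y A`, then the composite 2-cell obtained
by pasting `c_H`, the unit, and `y_L` exhibits `Hb ∘ res ∘ y B` as a left extension of
`H` along `L`. -/
theorem stmt8 (D : KZDoctrine 𝒞) {A B X : 𝒞} (L : A ⟶ B)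
    (res : D.P B ⟶ D.P A) (adj : Bicategory.Adjunction (D.lan L) res)
    (hX : PCocomplete D X) (H : A ⟶ X) (Hb : D.P A ⟶ X) (cH : H ≅ D.y A ≫ Hb)
    (hHb : ExhibitsLeftExt (D.y A) H Hb cH.hom) :
    ExhibitsLeftExt L H (D.y B ≫ res ≫ Hb)
      (cH.hom ≫ (D.y A ◁ (λ_ Hb).inv) ≫ (D.y A ◁ (adj.unit ▷ Hb)) ≫
        (D.y A ◁ (α_ (D.lan L) res Hb).hom) ≫
        (α_ (D.y A) (D.lan L) (res ≫ Hb)).inv ≫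
        ((D.c (L ≫ D.y B)).inv ▷ (res ≫ Hb)) ≫
        (α_ L (D.y B) (res ≫ Hb)).hom) := by
  have hRes : ExhibitsLeftExt (D.y B) (D.y B ≫ res ≫ Hb) (res ≫ Hb) (𝟙 _) :=
    ExhibitsLeftExt.of_iso ((hX.respectsLeftExt hHb (D.y B ≫ res)).of_exhibitsLeftExt
      (D.ext_isLeftExt _) (D.exhibitsLeftExt_of_adjunction adj)) (Iso.refl _) (α_ _ _ _).symm
        (Iso.refl _) (by simp)
  have hAlong : ExhibitsLeftExt (L ≫ D.y B) H (res ≫ Hb) _ :=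
    (hHb.comp (adj.exhibitsLeftExt_comp Hb)).of_iso (D.c (L ≫ D.y B)).symm (Iso.refl H)
      (Iso.refl _) rfl
  convert hAlong.of_comp hRes fun M => (hX M).imp fun _ ⟨cM, _⟩ => ⟨cM⟩ using 1
  simp
end

section
/- Let (P, y) be a KZ doctrine on a 2-category 𝒞, regarded as a pseudofunctor P : 𝒞 ⟶ 𝒞 with PF := lan_F on 1-cells (Marmolejo–Wood). Let L : A ⟶ B be P-admissible with adjunction PL ⊣ res_L (unit η), set R_L := res_L·y_B, and let φ_L : y_A ⟶ R_L·L be the composite of η whiskered by y_A with res_L whiskered on y_L. Then the 2-cell Pφ_L : Py_A ⟶ PR_L·PL, obtained by applying the pseudofunctor P to φ_L and composing with the pseudofunctoriality constraints, exhibits PL as an absolute left lifting of Py_A through PR_L. -/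
open CategoryTheory Bicategory

universe w v u

variable {𝒞 : Type u} [Bicategory.{w, v} 𝒞]

/-- The action of the pseudofunctor `P` on a 2-cell `θ : F ⟶ G`, defined via the
universal property of the chosen left extension `lan F`. -/
noncomputable def KZDoctrine.map2 (D : KZDoctrine 𝒞) {A B : 𝒞} {F G : A ⟶ B}
    (θ : F ⟶ G) : D.lan F ⟶ D.lan G :=
  Function.surjInv (D.ext_isLeftExt (F ≫ D.y B) (D.lan G)).2
    ((θ ▷ D.y B) ≫ (D.c (G ≫ D.y B)).hom)

/-- The (inverse) pseudofunctoriality constraint `P (F ≫ G) ⟶ P F ≫ P G`, arising from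
the uniqueness of left extensions. -/
noncomputable def KZDoctrine.comp2 (D : KZDoctrine 𝒞) {A B C : 𝒞} (F : A ⟶ B)
    (G : B ⟶ C) : D.lan (F ≫ G) ⟶ D.lan F ≫ D.lan G :=
  Function.surjInv (D.ext_isLeftExt ((F ≫ G) ≫ D.y C) (D.lan F ≫ D.lan G)).2
    ((α_ F G (D.y C)).hom ≫ (F ◁ (D.c (G ≫ D.y C)).hom) ≫
      (α_ F (D.y B) (D.lan G)).inv ≫ ((D.c (F ≫ D.y B)).hom ▷ D.lan G) ≫
      (α_ (D.y A) (D.lan F) (D.lan G)).hom)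

/-!
Two adjunctions carry the argument: `P y_A ⊣ m_A`, where `m_A` is the chosen extension of the
identity of `PA` (the multiplication of the KZ doctrine), and the given `PL ⊣ res_L`.
Both `res_L` and `P R_L · m_A` are left extensions of `R_L = res_L · y_B` along `y_B`. For
`P R_L · m_A` this is because the chosen extensions respect one another. For `res_L`, the
comparison `χ` from the chosen extension of `R_L` to `res_L` becomes invertible after whiskering
with `y_B`, and it is split epi: the unit of `PL ⊣ res_L` factors through `PL · χ`, and the mate
of the factorisation is a section. The resulting isomorphism `res_L ≅ P R_L · m_A` carries the
unit of `PL ⊣ res_L` to the unit of `P y_A ⊣ m_A` pasted with `Pφ_L`, and then, up to the two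
adjunction bijections, pasting with `Pφ_L` is composition with an isomorphism.
-/

namespace ExhibitsLeftExt

variable {a b c : 𝒞} {L : a ⟶ b} {I : a ⟶ c} {R : b ⟶ c} {η : I ⟶ L ≫ R}

noncomputable def desc (h : ExhibitsLeftExt L I R η) {M : b ⟶ c} (τ : I ⟶ L ≫ M) : R ⟶ M :=
  Function.surjInv (h M).2 τ

lemma fac (h : ExhibitsLeftExt L I R η) {M : b ⟶ c} (τ : I ⟶ L ≫ M) :
    η ≫ L ◁ h.desc τ = τ :=
  Function.surjInv_eq (h M).2 τ

lemma hom_ext (h : ExhibitsLeftExt L I R η) {M : b ⟶ c} {σ₁ σ₂ : R ⟶ M}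
    (e : η ≫ L ◁ σ₁ = η ≫ L ◁ σ₂) : σ₁ = σ₂ :=
  (h M).1 e

lemma iso_hom_comp (h : ExhibitsLeftExt L I R η) {I' : a ⟶ c} (e : I' ≅ I) :
    ExhibitsLeftExt L I' R (e.hom ≫ η) := fun M => by
  simpa only [Function.comp_def, Iso.homFromEquiv_apply, Iso.symm_inv, Category.assoc] using
    (e.symm.homFromEquiv (Z := L ≫ M)).bijective.comp (h M)

lemma comp_whiskerLeft_of_isIso (h : ExhibitsLeftExt L I R η) {R' : b ⟶ c} (χ : R ⟶ R')
    [IsIso χ] : ExhibitsLeftExt L I R' (η ≫ L ◁ χ) := fun M => by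
  simpa only [Function.comp_def, Iso.homFromEquiv_apply, Iso.symm_inv, asIso_hom,
    Bicategory.whiskerLeft_comp, Category.assoc] using
    (h M).comp ((asIso χ).symm.homFromEquiv (Z := M)).bijective

noncomputable def uniqueUpToIso {R' : b ⟶ c} {η' : I ⟶ L ≫ R'}
    (h : ExhibitsLeftExt L I R η) (h' : ExhibitsLeftExt L I R' η') : R ≅ R' where
  hom := h.desc η'
  inv := h'.desc η
  hom_inv_id := h.hom_ext (by
    rw [Bicategory.whiskerLeft_comp, ← Category.assoc, h.fac, h'.fac, Bicategory.whiskerLeft_id,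
      Category.comp_id])
  inv_hom_id := h'.hom_ext (by
    rw [Bicategory.whiskerLeft_comp, ← Category.assoc, h'.fac, h.fac, Bicategory.whiskerLeft_id,
      Category.comp_id])

lemma fac_uniqueUpToIso {R' : b ⟶ c} {η' : I ⟶ L ≫ R'}
    (h : ExhibitsLeftExt L I R η) (h' : ExhibitsLeftExt L I R' η') :
    η ≫ L ◁ (h.uniqueUpToIso h').hom = η' :=
  h.fac η'

lemma isIso_of_isSplitEpi (h : ExhibitsLeftExt L I R η) {R' : b ⟶ c} (χ : R ⟶ R')
    [IsSplitEpi χ] [IsIso (L ◁ χ)] : IsIso χ := by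
  have hs : L ◁ section_ χ = inv (L ◁ χ) := IsIso.eq_inv_of_inv_hom_id (by
    rw [← Bicategory.whiskerLeft_comp, IsSplitEpi.id, Bicategory.whiskerLeft_id])
  refine ⟨section_ χ, h.hom_ext ?_, IsSplitEpi.id χ⟩
  simp [hs]

end ExhibitsLeftExt

lemma CategoryTheory.Bicategory.Adjunction.isSplitEpi_of_unit_eq {a b : 𝒞} {l : a ⟶ b} {r : b ⟶ a}
    (adj : l ⊣ r) {E : b ⟶ a} (χ : E ⟶ r) (u : 𝟙 a ⟶ l ≫ E) (hu : u ≫ l ◁ χ = adj.unit) :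
    IsSplitEpi χ := by
  refine IsSplitEpi.mk' ⟨(ρ_ r).inv ≫ adj.homEquiv₁ u, ?_⟩
  calc ((ρ_ r).inv ≫ adj.homEquiv₁ u) ≫ χ
      = 𝟙 _ ⊗≫ r ◁ u ⊗≫ (adj.counit ▷ E ≫ 𝟙 b ◁ χ) ⊗≫ 𝟙 _ := by
        rw [Adjunction.homEquiv₁_apply]; bicategory
    _ = 𝟙 _ ⊗≫ r ◁ (u ≫ l ◁ χ) ⊗≫ adj.counit ▷ r ⊗≫ 𝟙 _ := by
        rw [← whisker_exchange]; bicategory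
    _ = 𝟙 _ ⊗≫ rightZigzag adj.unit adj.counit ⊗≫ 𝟙 _ := by
        rw [hu, rightZigzag]; bicategory
    _ = 𝟙 r := by
        rw [adj.right_triangle]; bicategory

theorem exhibitsAbsLeftLift_of_adjunction {a b c : 𝒞} {f : a ⟶ c} {g : c ⟶ a} {l : a ⟶ b}
    {r : b ⟶ a} (adj₁ : f ⊣ g) (adj₂ : l ⊣ r) {R : b ⟶ c} (η : f ⟶ l ≫ R) (j : r ≅ R ≫ g)
    (h : adj₁.unit ≫ η ▷ g ≫ (α_ l R g).hom = adj₂.unit ≫ l ◁ j.hom) :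
    ExhibitsAbsLeftLift R f l η := by
  intro x F K
  let e : (F ≫ l ⟶ K) ≃ (F ≫ f ⟶ K ≫ R) := adj₂.homEquiv₂.trans
    ((whiskerLeftIso K j ≪≫ (α_ K R g).symm).homToEquiv.trans adj₁.homEquiv₂.symm)
  convert e.bijective using 1
  funext δ
  refine adj₁.homEquiv₂.eq_symm_apply.mpr ?_
  rw [Iso.homToEquiv_apply, Adjunction.homEquiv₂_apply, Adjunction.homEquiv₂_apply]
  calc (ρ_ F).inv ≫ F ◁ adj₁.unit ≫ (α_ F f g).inv ≫ ((F ◁ η ≫ (α_ F l R).inv) ≫ δ ▷ R) ▷ g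
      = 𝟙 _ ⊗≫ F ◁ (adj₁.unit ≫ η ▷ g ≫ (α_ l R g).hom) ⊗≫ δ ▷ (R ≫ g) ⊗≫ 𝟙 _ := by
        bicategory
    _ = 𝟙 _ ⊗≫ F ◁ adj₂.unit ⊗≫ ((F ≫ l) ◁ j.hom ≫ δ ▷ (R ≫ g)) ⊗≫ 𝟙 _ := by
        rw [h]; bicategory
    _ = 𝟙 _ ⊗≫ F ◁ adj₂.unit ⊗≫ (δ ▷ r ≫ K ◁ j.hom) ⊗≫ 𝟙 _ := by
        rw [whisker_exchange]
    _ = ((ρ_ F).inv ≫ F ◁ adj₂.unit ≫ (α_ F l r).inv ≫ δ ▷ r) ≫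
          (whiskerLeftIso K j ≪≫ (α_ K R g).symm).hom := by
        simp only [Iso.trans_hom, whiskerLeftIso_hom, Iso.symm_hom]; bicategory

namespace KZDoctrine

variable (D : KZDoctrine 𝒞)

lemma map2_fac {A B : 𝒞} {F G : A ⟶ B} (θ : F ⟶ G) :
    (D.c (F ≫ D.y B)).hom ≫ D.y A ◁ D.map2 θ = θ ▷ D.y B ≫ (D.c (G ≫ D.y B)).hom :=
  (D.ext_isLeftExt _).fac _

lemma comp2_fac {A B C : 𝒞} (F : A ⟶ B) (G : B ⟶ C) :
    (D.c ((F ≫ G) ≫ D.y C)).hom ≫ D.y A ◁ D.comp2 F G =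
      (α_ F G (D.y C)).hom ≫ F ◁ (D.c (G ≫ D.y C)).hom ≫
        (α_ F (D.y B) (D.lan G)).inv ≫ (D.c (F ≫ D.y B)).hom ▷ D.lan G ≫
        (α_ (D.y A) (D.lan F) (D.lan G)).hom :=
  (D.ext_isLeftExt _).fac _

lemma c_hom_whiskerLeft_map2_comp2 {A B C : 𝒞} {F : A ⟶ C} {G : A ⟶ B} {H : B ⟶ C}
    (θ : F ⟶ G ≫ H) :
    (D.c (F ≫ D.y C)).hom ≫ D.y A ◁ (D.map2 θ ≫ D.comp2 G H) =
      θ ▷ D.y C ≫ (α_ G H (D.y C)).hom ≫ G ◁ (D.c (H ≫ D.y C)).hom ≫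
        (α_ G (D.y B) (D.lan H)).inv ≫ (D.c (G ≫ D.y B)).hom ▷ D.lan H ≫
        (α_ (D.y A) (D.lan G) (D.lan H)).hom := by
  rw [Bicategory.whiskerLeft_comp, ← Category.assoc, map2_fac, Category.assoc, comp2_fac]

abbrev mult (A : 𝒞) : D.P (D.P A) ⟶ D.P A := D.ext (𝟙 (D.P A))

section MultAdjunction

variable (A : 𝒞)

noncomputable def lanYToY : D.lan (D.y A) ⟶ D.y (D.P A) :=
  (D.ext_isLeftExt (D.y A ≫ D.y (D.P A))).desc (𝟙 _)

lemma lanYToY_fac :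
    (D.c (D.y A ≫ D.y (D.P A))).hom ≫ D.y A ◁ D.lanYToY A = 𝟙 (D.y A ≫ D.y (D.P A)) :=
  (D.ext_isLeftExt _).fac _

noncomputable def lanYMultUnit : 𝟙 (D.P A) ⟶ D.lan (D.y A) ≫ D.mult A :=
  (D.y_selfExt A).desc ((ρ_ (D.y A)).inv ≫ D.y A ◁ (D.c (𝟙 (D.P A))).hom ≫
    (α_ (D.y A) (D.y (D.P A)) (D.mult A)).inv ≫
    (D.c (D.y A ≫ D.y (D.P A))).hom ▷ D.mult A ≫
    (α_ (D.y A) (D.lan (D.y A)) (D.mult A)).hom)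

lemma whiskerLeft_lanYMultUnit :
    D.y A ◁ D.lanYMultUnit A = D.y A ◁ (D.c (𝟙 (D.P A))).hom ≫
      (α_ (D.y A) (D.y (D.P A)) (D.mult A)).inv ≫
      (D.c (D.y A ≫ D.y (D.P A))).hom ▷ D.mult A ≫
      (α_ (D.y A) (D.lan (D.y A)) (D.mult A)).hom := by
  rw [← cancel_epi (ρ_ (D.y A)).inv, lanYMultUnit, (D.y_selfExt A).fac]

noncomputable def lanYMultCounit : D.mult A ≫ D.lan (D.y A) ⟶ 𝟙 (D.P (D.P A)) :=
  ExhibitsLeftExt.desc (D.ext_respects (𝟙 (D.P A)) (D.y A ≫ D.y (D.P A)))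
    ((λ_ (D.lan (D.y A))).hom ≫ D.lanYToY A ≫ (ρ_ (D.y (D.P A))).inv)

lemma lanYMultCounit_fac :
    ((D.c (𝟙 (D.P A))).hom ▷ D.lan (D.y A) ≫ (α_ (D.y (D.P A)) (D.mult A) (D.lan (D.y A))).hom) ≫
      D.y (D.P A) ◁ D.lanYMultCounit A =
    (λ_ (D.lan (D.y A))).hom ≫ D.lanYToY A ≫ (ρ_ (D.y (D.P A))).inv :=
  ExhibitsLeftExt.fac (D.ext_respects _ _) _

lemma lanYMultUnit_whiskerRight_lanYToY :
    D.lanYMultUnit A ≫ D.lanYToY A ▷ D.mult A = (D.c (𝟙 (D.P A))).hom := by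
  refine (D.y_selfExt A).hom_ext ?_
  calc (ρ_ (D.y A)).inv ≫ D.y A ◁ (D.lanYMultUnit A ≫ D.lanYToY A ▷ D.mult A)
      = 𝟙 _ ⊗≫ D.y A ◁ (D.c (𝟙 (D.P A))).hom ⊗≫
          ((D.c (D.y A ≫ D.y (D.P A))).hom ≫ D.y A ◁ D.lanYToY A) ▷ D.mult A ⊗≫ 𝟙 _ := by
        rw [Bicategory.whiskerLeft_comp, whiskerLeft_lanYMultUnit]; bicategory
    _ = (ρ_ (D.y A)).inv ≫ D.y A ◁ (D.c (𝟙 (D.P A))).hom := by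
        rw [lanYToY_fac]; bicategory

lemma lanYMult_left_triangle :
    leftZigzag (D.lanYMultUnit A) (D.lanYMultCounit A) =
      (λ_ (D.lan (D.y A))).hom ≫ (ρ_ (D.lan (D.y A))).inv := by
  rw [← Iso.inv_comp_eq, ← Iso.comp_hom_eq_id]
  refine (D.ext_isLeftExt (D.y A ≫ D.y (D.P A))).hom_ext ?_
  calc (D.c (D.y A ≫ D.y (D.P A))).hom ≫ D.y A ◁ (((λ_ (D.lan (D.y A))).inv ≫
          leftZigzag (D.lanYMultUnit A) (D.lanYMultCounit A)) ≫ (ρ_ (D.lan (D.y A))).hom)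
      = (D.c (D.y A ≫ D.y (D.P A))).hom ⊗≫ (D.y A ◁ D.lanYMultUnit A) ▷ D.lan (D.y A) ⊗≫
          D.y A ◁ D.lan (D.y A) ◁ D.lanYMultCounit A ⊗≫ 𝟙 _ := by
        rw [leftZigzag]; bicategory
    _ = (D.c (D.y A ≫ D.y (D.P A))).hom ⊗≫
          (D.y A ◁ (D.c (𝟙 (D.P A))).hom) ▷ D.lan (D.y A) ⊗≫
          ((D.c (D.y A ≫ D.y (D.P A))).hom ▷ (D.mult A ≫ D.lan (D.y A)) ≫
            (D.y A ≫ D.lan (D.y A)) ◁ D.lanYMultCounit A) ⊗≫ 𝟙 _ := by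
        rw [whiskerLeft_lanYMultUnit]; bicategory
    _ = (D.c (D.y A ≫ D.y (D.P A))).hom ⊗≫
          D.y A ◁ (((D.c (𝟙 (D.P A))).hom ▷ D.lan (D.y A) ≫
            (α_ (D.y (D.P A)) (D.mult A) (D.lan (D.y A))).hom) ≫
              D.y (D.P A) ◁ D.lanYMultCounit A) ⊗≫
          (D.c (D.y A ≫ D.y (D.P A))).hom ▷ 𝟙 _ ⊗≫ 𝟙 _ := by
        rw [← whisker_exchange]; bicategory
    _ = 𝟙 _ ⊗≫ ((D.c (D.y A ≫ D.y (D.P A))).hom ≫ D.y A ◁ D.lanYToY A) ⊗≫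
          (D.c (D.y A ≫ D.y (D.P A))).hom ▷ 𝟙 _ ⊗≫ 𝟙 _ := by
        rw [lanYMultCounit_fac]; bicategory
    _ = (D.c (D.y A ≫ D.y (D.P A))).hom ≫ D.y A ◁ 𝟙 (D.lan (D.y A)) := by
        rw [lanYToY_fac]; bicategory

lemma lanYMult_right_triangle :
    rightZigzag (D.lanYMultUnit A) (D.lanYMultCounit A) =
      (ρ_ (D.mult A)).hom ≫ (λ_ (D.mult A)).inv := by
  rw [← Iso.inv_comp_eq, ← Iso.comp_hom_eq_id]
  refine (D.ext_isLeftExt (𝟙 (D.P A))).hom_ext ?_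
  calc (D.c (𝟙 (D.P A))).hom ≫ D.y (D.P A) ◁ (((ρ_ (D.mult A)).inv ≫
          rightZigzag (D.lanYMultUnit A) (D.lanYMultCounit A)) ≫ (λ_ (D.mult A)).hom)
      = 𝟙 _ ⊗≫ ((D.c (𝟙 (D.P A))).hom ▷ 𝟙 (D.P A) ≫
          (D.y (D.P A) ≫ D.mult A) ◁ D.lanYMultUnit A) ⊗≫
          D.y (D.P A) ◁ D.lanYMultCounit A ▷ D.mult A ⊗≫ 𝟙 _ := by
        rw [rightZigzag]; bicategory
    _ = 𝟙 _ ⊗≫ D.lanYMultUnit A ⊗≫ (((D.c (𝟙 (D.P A))).hom ▷ D.lan (D.y A) ≫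
          (α_ (D.y (D.P A)) (D.mult A) (D.lan (D.y A))).hom) ≫
            D.y (D.P A) ◁ D.lanYMultCounit A) ▷ D.mult A ⊗≫ 𝟙 _ := by
        rw [← whisker_exchange]; bicategory
    _ = 𝟙 _ ⊗≫ (D.lanYMultUnit A ≫ D.lanYToY A ▷ D.mult A) ⊗≫ 𝟙 _ := by
        rw [lanYMultCounit_fac]; bicategory
    _ = (D.c (𝟙 (D.P A))).hom ≫ D.y (D.P A) ◁ 𝟙 (D.mult A) := by
        rw [lanYMultUnit_whiskerRight_lanYToY]; bicategory

noncomputable def lanYMultAdj : D.lan (D.y A) ⊣ D.mult A where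
  unit := D.lanYMultUnit A
  counit := D.lanYMultCounit A
  left_triangle := D.lanYMult_left_triangle A
  right_triangle := D.lanYMult_right_triangle A

end MultAdjunction

lemma exhibitsLeftExt_lan_comp_mult {A B : 𝒞} (G : B ⟶ D.P A) :
    ExhibitsLeftExt (D.y B) G (D.lan G ≫ D.mult A)
      ((ρ_ G).inv ≫ G ◁ (D.c (𝟙 (D.P A))).hom ≫ (α_ G (D.y (D.P A)) (D.mult A)).inv ≫
        (D.c (G ≫ D.y (D.P A))).hom ▷ D.mult A ≫
        (α_ (D.y B) (D.lan G) (D.mult A)).hom) := by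
  simpa only [Iso.trans_hom, Iso.symm_hom, whiskerLeftIso_hom, Category.assoc] using
    ExhibitsLeftExt.iso_hom_comp (D.ext_respects (G ≫ D.y (D.P A)) (𝟙 (D.P A)))
      ((ρ_ G).symm ≪≫ whiskerLeftIso G (D.c (𝟙 (D.P A))) ≪≫
        (α_ G (D.y (D.P A)) (D.mult A)).symm)

noncomputable def extComparison {A B : 𝒞} (r : D.P B ⟶ D.P A) : D.ext (D.y B ≫ r) ⟶ r :=
  (D.ext_isLeftExt (D.y B ≫ r)).desc (𝟙 _)

lemma whiskerLeft_extComparison {A B : 𝒞} (r : D.P B ⟶ D.P A) :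
    D.y B ◁ D.extComparison r = (D.c (D.y B ≫ r)).inv := by
  rw [← Iso.hom_comp_eq_id]
  exact (D.ext_isLeftExt _).fac _

section RightAdjoint

variable {A B : 𝒞} {L : A ⟶ B} {res : D.P B ⟶ D.P A} (adj : D.lan L ⊣ res)

noncomputable def phi : D.y A ⟶ L ≫ (D.y B ≫ res) :=
  (ρ_ (D.y A)).inv ≫ (D.y A ◁ adj.unit) ≫ (α_ (D.y A) (D.lan L) res).inv ≫
    ((D.c (L ≫ D.y B)).inv ▷ res) ≫ (α_ L (D.y B) res).hom

noncomputable def unitThroughExt : 𝟙 (D.P A) ⟶ D.lan L ≫ D.ext (D.y B ≫ res) :=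
  (D.y_selfExt A).desc (D.phi adj ≫ L ◁ (D.c (D.y B ≫ res)).hom ≫
    (α_ L (D.y B) (D.ext (D.y B ≫ res))).inv ≫
    (D.c (L ≫ D.y B)).hom ▷ D.ext (D.y B ≫ res) ≫
    (α_ (D.y A) (D.lan L) (D.ext (D.y B ≫ res))).hom)

lemma unitThroughExt_comp_extComparison :
    D.unitThroughExt adj ≫ D.lan L ◁ D.extComparison res = adj.unit := by
  refine (D.y_selfExt A).hom_ext ?_
  rw [Bicategory.whiskerLeft_comp, ← Category.assoc, unitThroughExt, (D.y_selfExt A).fac]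
  calc _ = D.phi adj ≫ L ◁ (D.c (D.y B ≫ res)).hom ⊗≫
          ((D.c (L ≫ D.y B)).hom ▷ D.ext (D.y B ≫ res) ≫
            (D.y A ≫ D.lan L) ◁ D.extComparison res) ⊗≫ 𝟙 _ := by
        bicategory
    _ = D.phi adj ≫ L ◁ ((D.c (D.y B ≫ res)).hom ≫ D.y B ◁ D.extComparison res) ⊗≫
          (D.c (L ≫ D.y B)).hom ▷ res ⊗≫ 𝟙 _ := by
        rw [← whisker_exchange]; bicategory
    _ = (ρ_ (D.y A)).inv ≫ D.y A ◁ adj.unit ≫ (α_ (D.y A) (D.lan L) res).inv ≫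
          ((D.c (L ≫ D.y B)).inv ≫ (D.c (L ≫ D.y B)).hom) ▷ res ≫
          (α_ (D.y A) (D.lan L) res).hom := by
        rw [whiskerLeft_extComparison, Iso.hom_inv_id, phi]; bicategory
    _ = (ρ_ (D.y A)).inv ≫ D.y A ◁ adj.unit := by
        rw [Iso.inv_hom_id]; bicategory

lemma isIso_extComparison (adj : D.lan L ⊣ res) : IsIso (D.extComparison res) := by
  have := adj.isSplitEpi_of_unit_eq _ _ (D.unitThroughExt_comp_extComparison adj)
  have : IsIso (D.y B ◁ D.extComparison res) := by
    rw [whiskerLeft_extComparison]; infer_instance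
  exact (D.ext_isLeftExt _).isIso_of_isSplitEpi _

lemma exhibitsLeftExt_rightAdjoint (adj : D.lan L ⊣ res) :
    ExhibitsLeftExt (D.y B) (D.y B ≫ res) res (𝟙 _) := by
  have := D.isIso_extComparison adj
  convert (D.ext_isLeftExt (D.y B ≫ res)).comp_whiskerLeft_of_isIso (D.extComparison res)
  exact ((D.ext_isLeftExt _).fac _).symm

noncomputable def resIsoLanComp : res ≅ D.lan (D.y B ≫ res) ≫ D.mult A :=
  (D.exhibitsLeftExt_rightAdjoint adj).uniqueUpToIso (D.exhibitsLeftExt_lan_comp_mult _)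

lemma whiskerLeft_resIsoLanComp_hom :
    D.y B ◁ (D.resIsoLanComp adj).hom =
      (ρ_ (D.y B ≫ res)).inv ≫ (D.y B ≫ res) ◁ (D.c (𝟙 (D.P A))).hom ≫
        (α_ (D.y B ≫ res) (D.y (D.P A)) (D.mult A)).inv ≫
        (D.c ((D.y B ≫ res) ≫ D.y (D.P A))).hom ▷ D.mult A ≫
        (α_ (D.y B) (D.lan (D.y B ≫ res)) (D.mult A)).hom :=
  (Category.id_comp _).symm.trans (ExhibitsLeftExt.fac_uniqueUpToIso _ _)

lemma lanYMultUnit_comp_map2_phi :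
    D.lanYMultUnit A ≫ (D.map2 (D.phi adj) ≫ D.comp2 L (D.y B ≫ res)) ▷ D.mult A ≫
        (α_ (D.lan L) (D.lan (D.y B ≫ res)) (D.mult A)).hom =
      adj.unit ≫ D.lan L ◁ (D.resIsoLanComp adj).hom := by
  refine (D.y_selfExt A).hom_ext ?_
  calc _ = 𝟙 _ ⊗≫ D.y A ◁ (D.c (𝟙 (D.P A))).hom ⊗≫
          ((D.c (D.y A ≫ D.y (D.P A))).hom ≫
            D.y A ◁ (D.map2 (D.phi adj) ≫ D.comp2 L (D.y B ≫ res))) ▷ D.mult A ⊗≫ 𝟙 _ := by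
        rw [Bicategory.whiskerLeft_comp, whiskerLeft_lanYMultUnit]; bicategory
    _ = 𝟙 _ ⊗≫ (D.y A ◁ (D.c (𝟙 (D.P A))).hom ≫ D.phi adj ▷ (D.y (D.P A) ≫ D.mult A)) ⊗≫
          L ◁ (D.c ((D.y B ≫ res) ≫ D.y (D.P A))).hom ▷ D.mult A ⊗≫
          (D.c (L ≫ D.y B)).hom ▷ (D.lan (D.y B ≫ res) ≫ D.mult A) ⊗≫ 𝟙 _ := by
        rw [c_hom_whiskerLeft_map2_comp2]; bicategory
    _ = 𝟙 _ ⊗≫ D.phi adj ⊗≫ L ◁ D.y B ◁ (D.resIsoLanComp adj).hom ⊗≫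
          (D.c (L ≫ D.y B)).hom ▷ (D.lan (D.y B ≫ res) ≫ D.mult A) ⊗≫ 𝟙 _ := by
        rw [whisker_exchange, whiskerLeft_resIsoLanComp_hom]; bicategory
    _ = 𝟙 _ ⊗≫ D.y A ◁ adj.unit ⊗≫
          ((D.c (L ≫ D.y B)).inv ▷ res ≫ (L ≫ D.y B) ◁ (D.resIsoLanComp adj).hom) ⊗≫
          (D.c (L ≫ D.y B)).hom ▷ (D.lan (D.y B ≫ res) ≫ D.mult A) ⊗≫ 𝟙 _ := by
        rw [phi]; bicategory
    _ = 𝟙 _ ⊗≫ D.y A ◁ adj.unit ⊗≫ (D.y A ≫ D.lan L) ◁ (D.resIsoLanComp adj).hom ⊗≫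
          ((D.c (L ≫ D.y B)).inv ≫ (D.c (L ≫ D.y B)).hom) ▷
            (D.lan (D.y B ≫ res) ≫ D.mult A) ⊗≫ 𝟙 _ := by
        rw [← whisker_exchange]; bicategory
    _ = _ := by
        rw [Iso.inv_hom_id]; bicategory

end RightAdjoint

end KZDoctrine

/-- For `P`-admissible `L` (with `lan L ⊣ res`, unit `adj.unit`,
`R_L := res ∘ y B` and `φ_L` the usual pasting), the 2-cell `P φ_L` — obtained by
applying `P` to `φ_L` and composing with the pseudofunctoriality constraint — exhibits
`P L` as an absolute left lifting of `P y_A` through `P R_L`. -/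
theorem stmt11 (D : KZDoctrine 𝒞) {A B : 𝒞} (L : A ⟶ B)
    (res : D.P B ⟶ D.P A) (adj : Bicategory.Adjunction (D.lan L) res) :
    ExhibitsAbsLeftLift (D.lan (D.y B ≫ res)) (D.lan (D.y A)) (D.lan L)
      (D.map2 ((ρ_ (D.y A)).inv ≫ (D.y A ◁ adj.unit) ≫
          (α_ (D.y A) (D.lan L) res).inv ≫ ((D.c (L ≫ D.y B)).inv ▷ res) ≫
          (α_ L (D.y B) res).hom) ≫
        D.comp2 L (D.y B ≫ res)) :=
  exhibitsAbsLeftLift_of_adjunction (D.lanYMultAdj A) adj _ (D.resIsoLanComp adj)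
    (D.lanYMultUnit_comp_map2_phi adj)
end
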